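/- Suppose R satisfies the curvature-type symmetries and the q-invariance R(qx,qy,qz,qu) = R(x,y,z,u). If u ∈ ℝ³ induces a q-basis, then the sectional curvatures of the three 2-planes spanned by {u, qu}, {qu, q²u} and {q²u, u} are equal: μ(u, qu) = μ(qu, q²u) = μ(u, q²u). -/

import Mathlib

/-!
`q` is a `g`-isometry and `R` is `q`-invariant, so `μ(qx, qy) = μ(x, y)`. Applied to `(u, qu)` this
gives the first equality; applied to `(q²u, -u)` (using `q³ = -id`) it gives
`μ(qu, q²u) = μ(q²u, -u)`, and `μ(x, -y) = μ(x, y) = μ(y, x)` by the curvature symmetries.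
-/

/-- The metric `g` determined by the circulant matrix with rows `(A,B,B),(B,A,B),(B,B,A)`. -/
def g (A B : ℝ) (x y : Fin 3 → ℝ) : ℝ :=
  A * (x 0 * y 0 + x 1 * y 1 + x 2 * y 2) +
    B * (x 0 * y 1 + x 0 * y 2 + x 1 * y 0 + x 1 * y 2 + x 2 * y 0 + x 2 * y 1)

/-- The structure `q`, given by `q(x¹,x²,x³) = (-x²,-x³,-x¹)`, with `q³ = -id`. -/
def q (x : Fin 3 → ℝ) : Fin 3 → ℝ := ![-(x 1), -(x 2), -(x 0)]

/-- The sectional curvature of the 2-plane spanned by `x, y`. -/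
noncomputable def sec (A B : ℝ) (R : MultilinearMap ℝ (fun _ : Fin 4 => Fin 3 → ℝ) ℝ)
    (x y : Fin 3 → ℝ) : ℝ :=
  R ![x, y, x, y] / (g A B x x * g A B y y - (g A B x y) ^ 2)

theorem MultilinearMap.map_neg_second_neg_fourth {R M N : Type*} [CommRing R] [AddCommGroup M]
    [Module R M] [AddCommGroup N] [Module R N]
    (f : MultilinearMap R (fun _ : Fin 4 => M) N) (x y z w : M) :
    f ![x, -y, z, -w] = f ![x, y, z, w] := by
  have h : ![x, -y, z, -w] = Function.update (Function.update ![x, y, z, w] 1 (-y)) 3 (-w) := by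
    ext i; fin_cases i <;> rfl
  have h' : ![x, y, z, w] = Function.update (Function.update ![x, y, z, w] 1 y) 3 w := by
    ext i; fin_cases i <;> rfl
  rw [h, f.map_update_neg, Function.update_comm (by decide), f.map_update_neg, neg_neg,
    Function.update_comm (by decide), ← h']

theorem q_q_q (x : Fin 3 → ℝ) : q (q (q x)) = -x := by
  funext i; fin_cases i <;> simp [q]

section Metric

variable (A B : ℝ) (x y : Fin 3 → ℝ)

theorem g_comm : g A B x y = g A B y x := by
  simp only [g]; ring

theorem g_neg_right : g A B x (-y) = -g A B x y := by
  simp only [g, Pi.neg_apply]; ring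

theorem g_q_q : g A B (q x) (q y) = g A B x y := by
  simp only [g, q, Matrix.cons_val_zero, Matrix.cons_val_one, Matrix.cons_val_two,
    Matrix.head_cons, Matrix.tail_cons]
  ring

end Metric

section SectionalCurvature

variable {A B : ℝ} {R : MultilinearMap ℝ (fun _ : Fin 4 => Fin 3 → ℝ) ℝ}

theorem sec_comm
    (hsym1 : ∀ x y z u : Fin 3 → ℝ, R ![x, y, z, u] = -R ![y, x, z, u])
    (hsym2 : ∀ x y z u : Fin 3 → ℝ, R ![x, y, z, u] = -R ![x, y, u, z]) (x y : Fin 3 → ℝ) :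
    sec A B R x y = sec A B R y x := by
  rw [sec, sec, hsym1, hsym2, neg_neg, g_comm A B x y]
  ring

theorem sec_neg_right (x y : Fin 3 → ℝ) : sec A B R x (-y) = sec A B R x y := by
  rw [sec, sec, R.map_neg_second_neg_fourth, g_neg_right, g_neg_right, g_comm A B (-y),
    g_neg_right]
  ring

theorem sec_q_q (hq : ∀ x y z u : Fin 3 → ℝ, R ![q x, q y, q z, q u] = R ![x, y, z, u])
    (x y : Fin 3 → ℝ) : sec A B R (q x) (q y) = sec A B R x y := by
  rw [sec, sec, hq, g_q_q, g_q_q, g_q_q]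

end SectionalCurvature

theorem sectional_curvatures_equal_general (A B : ℝ)
    (R : MultilinearMap ℝ (fun _ : Fin 4 => Fin 3 → ℝ) ℝ)
    (hsym1 : ∀ x y z u : Fin 3 → ℝ, R ![x, y, z, u] = -R ![y, x, z, u])
    (hsym2 : ∀ x y z u : Fin 3 → ℝ, R ![x, y, z, u] = -R ![x, y, u, z])
    (hq : ∀ x y z u : Fin 3 → ℝ, R ![q x, q y, q z, q u] = R ![x, y, z, u])
    (u : Fin 3 → ℝ) :
    sec A B R u (q u) = sec A B R (q u) (q (q u)) ∧
      sec A B R (q u) (q (q u)) = sec A B R u (q (q u)) := by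
  constructor
  · exact (sec_q_q hq u (q u)).symm
  · calc sec A B R (q u) (q (q u)) = sec A B R (q (q u)) (-u) := by rw [← sec_q_q hq, q_q_q]
      _ = sec A B R u (q (q u)) := by rw [sec_neg_right, sec_comm hsym1 hsym2]

/-- if `u` induces a `q`-basis then the sectional curvatures of the 2-planes
`{u,qu}`, `{qu,q²u}` and `{q²u,u}` are equal. -/
theorem sectional_curvatures_equal (A B : ℝ) (hAB : A > B) (hB : B > 0)
    (R : MultilinearMap ℝ (fun _ : Fin 4 => Fin 3 → ℝ) ℝ)
    (hsym1 : ∀ x y z u : Fin 3 → ℝ, R ![x, y, z, u] = -R ![y, x, z, u])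
    (hsym2 : ∀ x y z u : Fin 3 → ℝ, R ![x, y, z, u] = -R ![x, y, u, z])
    (hsym3 : ∀ x y z u : Fin 3 → ℝ, R ![x, y, z, u] = R ![z, u, x, y])
    (hq : ∀ x y z u : Fin 3 → ℝ, R ![q x, q y, q z, q u] = R ![x, y, z, u])
    (u : Fin 3 → ℝ) (hu : LinearIndependent ℝ ![u, q u, q (q u)]) :
    sec A B R u (q u) = sec A B R (q u) (q (q u)) ∧
      sec A B R (q u) (q (q u)) = sec A B R u (q (q u)) :=
  sectional_curvatures_equal_general A B R hsym1 hsym2 hq u
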